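/- arXiv:1204.1359 — 5 statements merged into one kernel-verified Lean document; each statement's English description precedes it below -/
import Mathlib

section
/- Let Λ = (Λ_i)_{i∈I} be a g-frame for H with bounds A, B, and let C, C′ be positive invertible operators on H that commute with each other and commute with the frame operator S_Λ (where S_Λ f = ∑_{i∈I} Λ_i*Λ_i f). Suppose m·I ≤ C ≤ M·I and m′·I ≤ C′ ≤ M′·I for constants 0 < m ≤ M < ∞ and 0 < m′ ≤ M′ < ∞. Then for every f ∈ H the family (⟨Λ_i(Cf), Λ_i(C′f)⟩)_{i∈I} is summable and m m′ A ‖f‖² ≤ Re ∑_{i∈I} ⟨Λ_i(Cf), Λ_i(C′f)⟩ ≤ M M′ B ‖f‖²; that is, Λ is a (C,C′)-controlled g-frame with bounds m m′ A and M M′ B. -/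
/-!
By the frame identity `∑ ⟪Λᵢ u, Λᵢ v⟫ = ⟪u, S v⟫` and self-adjointness of `C`, the controlled sum
is `⟪C C' S f, f⟫`. In the Loewner order the hypotheses say `m ≤ C ≤ M`, `m' ≤ C' ≤ M'` and
`A ≤ S ≤ B`, and since a product of commuting positive operators is positive, such bounds multiply
for commuting operators: `m m' A ≤ C C' S ≤ M M' B`.
-/

section CStarAlgebra

variable {A : Type*} [CStarAlgebra A] [PartialOrder A] [StarOrderedRing A]

theorem mul_le_mul_of_commute {a b c d : A} (hab : a ≤ b) (hcd : c ≤ d) (ha : 0 ≤ a)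
    (hd : 0 ≤ d) (had : Commute a d) (hbd : Commute b d) (hac : Commute a c) :
    a * c ≤ b * d := by
  have hsplit : b * d - a * c = (b - a) * d + a * (d - c) := by noncomm_ring
  rw [← sub_nonneg, hsplit]
  exact add_nonneg ((hbd.sub_left had).mul_nonneg (sub_nonneg.2 hab) hd)
    ((had.sub_right hac).mul_nonneg ha (sub_nonneg.2 hcd))

theorem algebraMap_mul_le_mul_of_commute {a b : A} {r s : ℝ} (hr : 0 ≤ r) (hb₀ : 0 ≤ b)
    (ha : algebraMap ℝ A r ≤ a) (hb : algebraMap ℝ A s ≤ b) (hab : Commute a b) :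
    algebraMap ℝ A (r * s) ≤ a * b := by
  rw [map_mul]
  exact mul_le_mul_of_commute ha hb (algebraMap_nonneg A hr) hb₀
    (Algebra.commute_algebraMap_left r b) hab (Algebra.commutes' r _)

theorem mul_le_algebraMap_mul_of_commute {a b : A} {r s : ℝ} (ha₀ : 0 ≤ a) (hs : 0 ≤ s)
    (ha : a ≤ algebraMap ℝ A r) (hb : b ≤ algebraMap ℝ A s) (hab : Commute a b) :
    a * b ≤ algebraMap ℝ A (r * s) := by
  rw [map_mul]
  exact mul_le_mul_of_commute ha hb ha₀ (algebraMap_nonneg A hs)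
    (Algebra.commute_algebraMap_right s a) (Algebra.commutes' s _).symm hab

end CStarAlgebra

namespace ContinuousLinearMap

variable {H : Type*} [NormedAddCommGroup H] [InnerProductSpace ℂ H]

theorem re_inner_algebraMap_apply (c : ℝ) (f : H) :
    (inner ℂ (algebraMap ℝ (H →L[ℂ] H) c f) f).re = c * ‖f‖ ^ 2 := by
  simp [Algebra.algebraMap_eq_smul_one, ← inner_self_eq_norm_sq (𝕜 := ℂ)]

theorem re_inner_le_re_inner_of_le {T T' : H →L[ℂ] H} (h : T ≤ T') (f : H) :
    (inner ℂ (T f) f).re ≤ (inner ℂ (T' f) f).re := by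
  have := ((le_def T T').1 h).re_inner_nonneg_left f
  simpa [inner_sub_left] using this

variable [CompleteSpace H]

theorem le_of_re_inner_le_re_inner {T T' : H →L[ℂ] H} (hT : IsSelfAdjoint T)
    (hT' : IsSelfAdjoint T') (h : ∀ f, (inner ℂ (T f) f).re ≤ (inner ℂ (T' f) f).re) :
    T ≤ T' := by
  refine (le_def T T').2 (isPositive_def'.2 ⟨hT'.sub hT, fun f => ?_⟩)
  simpa [reApplyInnerSelf_apply, inner_sub_left] using h f

theorem algebraMap_le_of_forall_le_re_inner {T : H →L[ℂ] H} (hT : IsSelfAdjoint T) {c : ℝ}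
    (h : ∀ f, c * ‖f‖ ^ 2 ≤ (inner ℂ (T f) f).re) : algebraMap ℝ (H →L[ℂ] H) c ≤ T :=
  le_of_re_inner_le_re_inner (.algebraMap _ (.all c)) hT fun f => by
    rw [re_inner_algebraMap_apply]; exact h f

theorem le_algebraMap_of_forall_re_inner_le {T : H →L[ℂ] H} (hT : IsSelfAdjoint T) {c : ℝ}
    (h : ∀ f, (inner ℂ (T f) f).re ≤ c * ‖f‖ ^ 2) : T ≤ algebraMap ℝ (H →L[ℂ] H) c :=
  le_of_re_inner_le_re_inner hT (.algebraMap _ (.all c)) fun f => by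
    rw [re_inner_algebraMap_apply]; exact h f

end ContinuousLinearMap

section GFrameOperator

variable {H : Type*} [NormedAddCommGroup H] [InnerProductSpace ℂ H] [CompleteSpace H]
  {ι : Type*} {G : ι → Type*} [∀ i, NormedAddCommGroup (G i)] [∀ i, InnerProductSpace ℂ (G i)]
  [∀ i, CompleteSpace (G i)]

def IsGFrameOperator (Λ : ∀ i, H →L[ℂ] G i) (S : H →L[ℂ] H) : Prop :=
  ∀ f, HasSum (fun i => (Λ i).adjoint (Λ i f)) (S f)

namespace IsGFrameOperator

variable {Λ : ∀ i, H →L[ℂ] G i} {S : H →L[ℂ] H}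

theorem hasSum_inner (hS : IsGFrameOperator Λ S) (f g : H) :
    HasSum (fun i => inner ℂ (Λ i f) (Λ i g)) (inner ℂ f (S g)) := by
  simpa only [innerSL_apply_apply, ContinuousLinearMap.adjoint_inner_right]
    using (hS g).mapL (innerSL ℂ f)

theorem hasSum_norm_sq (hS : IsGFrameOperator Λ S) (f : H) :
    HasSum (fun i => ‖Λ i f‖ ^ 2) (inner ℂ (S f) f).re := by
  have h := (hS.hasSum_inner f f).mapL Complex.reCLM
  simp only [Complex.reCLM_apply, ← RCLike.re_to_complex, inner_self_eq_norm_sq] at h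
  rwa [inner_re_symm] at h

theorem isSelfAdjoint (hS : IsGFrameOperator Λ S) : IsSelfAdjoint S := by
  refine ContinuousLinearMap.isSelfAdjoint_iff_isSymmetric.2 fun f g => ?_
  have h := (hS.hasSum_inner g f).star
  simp only [RCLike.star_def, inner_conj_symm] at h
  exact h.unique (hS.hasSum_inner f g)

theorem nonneg (hS : IsGFrameOperator Λ S) : 0 ≤ S :=
  ContinuousLinearMap.le_of_re_inner_le_re_inner (.zero _) hS.isSelfAdjoint fun f => by
    simpa using (hS.hasSum_norm_sq f).nonneg fun i => by positivity

theorem algebraMap_le (hS : IsGFrameOperator Λ S) {A : ℝ}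
    (hA : ∀ f, A * ‖f‖ ^ 2 ≤ ∑' i, ‖Λ i f‖ ^ 2) : algebraMap ℝ (H →L[ℂ] H) A ≤ S :=
  ContinuousLinearMap.algebraMap_le_of_forall_le_re_inner hS.isSelfAdjoint fun f =>
    (hS.hasSum_norm_sq f).tsum_eq ▸ hA f

theorem le_algebraMap (hS : IsGFrameOperator Λ S) {B : ℝ}
    (hB : ∀ f, ∑' i, ‖Λ i f‖ ^ 2 ≤ B * ‖f‖ ^ 2) : S ≤ algebraMap ℝ (H →L[ℂ] H) B :=
  ContinuousLinearMap.le_algebraMap_of_forall_re_inner_le hS.isSelfAdjoint fun f =>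
    (hS.hasSum_norm_sq f).tsum_eq ▸ hB f

theorem re_tsum_inner_apply_eq (hS : IsGFrameOperator Λ S) {C C' : H →L[ℂ] H}
    (hC : IsSelfAdjoint C) (hC'S : Commute C' S) (f : H) :
    (∑' i, inner ℂ (Λ i (C f)) (Λ i (C' f))).re = (inner ℂ ((C * C' * S) f) f).re := by
  rw [(hS.hasSum_inner (C f) (C' f)).tsum_eq, mul_assoc, hC'S.eq, mul_apply_eq_comp,
    mul_apply_eq_comp, ← inner_conj_symm, Complex.conj_re,
    ← ContinuousLinearMap.adjoint_inner_left C, hC.adjoint_eq]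

end IsGFrameOperator

end GFrameOperator

theorem gframe_is_CC'_controlled_gframe_general
    {H : Type*} [NormedAddCommGroup H] [InnerProductSpace ℂ H] [CompleteSpace H]
    {ι : Type*}
    {G : ι → Type*} [∀ i, NormedAddCommGroup (G i)] [∀ i, InnerProductSpace ℂ (G i)]
    [∀ i, CompleteSpace (G i)]
    (Λ : ∀ i, H →L[ℂ] G i)
    (C C' S : H →L[ℂ] H)
    (hC_sa : IsSelfAdjoint C) (hC'_sa : IsSelfAdjoint C')
    (hS : ∀ f : H, HasSum (fun i => (ContinuousLinearMap.adjoint (Λ i)) (Λ i f)) (S f))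
    (hcomm₁ : C ∘L C' = C' ∘L C)
    (hcomm₂ : C ∘L S = S ∘L C)
    (hcomm₃ : C' ∘L S = S ∘L C')
    (A B m m' M M' : ℝ)
    (hm : 0 < m) (hmM : m ≤ M)
    (hm' : 0 < m') (hm'M' : m' ≤ M')
    (hC_lb : ∀ f : H, m * ‖f‖ ^ 2 ≤ (inner ℂ (C f) f : ℂ).re)
    (hC_ub : ∀ f : H, (inner ℂ (C f) f : ℂ).re ≤ M * ‖f‖ ^ 2)
    (hC'_lb : ∀ f : H, m' * ‖f‖ ^ 2 ≤ (inner ℂ (C' f) f : ℂ).re)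
    (hC'_ub : ∀ f : H, (inner ℂ (C' f) f : ℂ).re ≤ M' * ‖f‖ ^ 2)
    (hlower : ∀ f : H, A * ‖f‖ ^ 2 ≤ ∑' i, ‖Λ i f‖ ^ 2)
    (hupper : ∀ f : H, ∑' i, ‖Λ i f‖ ^ 2 ≤ B * ‖f‖ ^ 2) :
    ∀ f : H, Summable (fun i => (inner ℂ (Λ i (C f)) (Λ i (C' f)) : ℂ)) ∧
      m * m' * A * ‖f‖ ^ 2 ≤ (∑' i, (inner ℂ (Λ i (C f)) (Λ i (C' f)) : ℂ)).re ∧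
      (∑' i, (inner ℂ (Λ i (C f)) (Λ i (C' f)) : ℂ)).re ≤ M * M' * B * ‖f‖ ^ 2 := by
  have hS : IsGFrameOperator Λ S := hS
  have hCC' : Commute C C' := hcomm₁
  have hC'S : Commute C' S := hcomm₃
  have hCC'_S : Commute (C * C') S := Commute.mul_left hcomm₂ hC'S
  have hCm := ContinuousLinearMap.algebraMap_le_of_forall_le_re_inner hC_sa hC_lb
  have hC'm' := ContinuousLinearMap.algebraMap_le_of_forall_le_re_inner hC'_sa hC'_lb
  have hCM := ContinuousLinearMap.le_algebraMap_of_forall_re_inner_le hC_sa hC_ub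
  have hC'M' := ContinuousLinearMap.le_algebraMap_of_forall_re_inner_le hC'_sa hC'_ub
  have hlow : algebraMap ℝ _ (m * m' * A) ≤ C * C' * S :=
    algebraMap_mul_le_mul_of_commute (by positivity) hS.nonneg
      (algebraMap_mul_le_mul_of_commute hm.le ((algebraMap_nonneg _ hm'.le).trans hC'm')
        hCm hC'm' hCC')
      (hS.algebraMap_le hlower) hCC'_S
  have hup : C * C' * S ≤ algebraMap ℝ _ (M * M' * B) := by
    rw [hCC'_S.eq, mul_comm (M * M')]
    exact mul_le_algebraMap_mul_of_commute hS.nonneg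
      (mul_nonneg (hm.le.trans hmM) (hm'.le.trans hm'M')) (hS.le_algebraMap hupper)
      (mul_le_algebraMap_mul_of_commute ((algebraMap_nonneg _ hm.le).trans hCm)
        (hm'.le.trans hm'M') hCM hC'M' hCC')
      hCC'_S.symm
  intro f
  refine ⟨(hS.hasSum_inner (C f) (C' f)).summable, ?_, ?_⟩ <;>
    rw [hS.re_tsum_inner_apply_eq hC_sa hC'S, ← ContinuousLinearMap.re_inner_algebraMap_apply]
  exacts [ContinuousLinearMap.re_inner_le_re_inner_of_le hlow f,
    ContinuousLinearMap.re_inner_le_re_inner_of_le hup f]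

/-- If `Λ` is a g-frame with bounds `A, B` and `C, C'` are positive invertible
operators commuting with each other and with the frame operator `S`, with
`m·I ≤ C ≤ M·I` and `m'·I ≤ C' ≤ M'·I`, then `Λ` is a `(C,C')`-controlled g-frame with
bounds `m m' A` and `M M' B`. -/
theorem gframe_is_CC'_controlled_gframe
    {H : Type*} [NormedAddCommGroup H] [InnerProductSpace ℂ H] [CompleteSpace H]
    {ι : Type*} [Countable ι]
    {G : ι → Type*} [∀ i, NormedAddCommGroup (G i)] [∀ i, InnerProductSpace ℂ (G i)]
    [∀ i, CompleteSpace (G i)]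
    (Λ : ∀ i, H →L[ℂ] G i)
    (C C' S : H →L[ℂ] H)
    (hC_sa : IsSelfAdjoint C) (hC'_sa : IsSelfAdjoint C')
    (hC_pos : ∀ f : H, f ≠ 0 → 0 < (inner ℂ (C f) f : ℂ).re)
    (hC'_pos : ∀ f : H, f ≠ 0 → 0 < (inner ℂ (C' f) f : ℂ).re)
    (hC_bij : Function.Bijective C) (hC'_bij : Function.Bijective C')
    (hS : ∀ f : H, HasSum (fun i => (ContinuousLinearMap.adjoint (Λ i)) (Λ i f)) (S f))
    (hcomm₁ : C ∘L C' = C' ∘L C)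
    (hcomm₂ : C ∘L S = S ∘L C)
    (hcomm₃ : C' ∘L S = S ∘L C')
    (A B m m' M M' : ℝ)
    (hA : 0 < A) (hB : 0 < B)
    (hm : 0 < m) (hmM : m ≤ M)
    (hm' : 0 < m') (hm'M' : m' ≤ M')
    (hC_lb : ∀ f : H, m * ‖f‖ ^ 2 ≤ (inner ℂ (C f) f : ℂ).re)
    (hC_ub : ∀ f : H, (inner ℂ (C f) f : ℂ).re ≤ M * ‖f‖ ^ 2)
    (hC'_lb : ∀ f : H, m' * ‖f‖ ^ 2 ≤ (inner ℂ (C' f) f : ℂ).re)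
    (hC'_ub : ∀ f : H, (inner ℂ (C' f) f : ℂ).re ≤ M' * ‖f‖ ^ 2)
    (hsum : ∀ f : H, Summable fun i => ‖Λ i f‖ ^ 2)
    (hlower : ∀ f : H, A * ‖f‖ ^ 2 ≤ ∑' i, ‖Λ i f‖ ^ 2)
    (hupper : ∀ f : H, ∑' i, ‖Λ i f‖ ^ 2 ≤ B * ‖f‖ ^ 2) :
    ∀ f : H, Summable (fun i => (inner ℂ (Λ i (C f)) (Λ i (C' f)) : ℂ)) ∧
      m * m' * A * ‖f‖ ^ 2 ≤ (∑' i, (inner ℂ (Λ i (C f)) (Λ i (C' f)) : ℂ)).re ∧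
      (∑' i, (inner ℂ (Λ i (C f)) (Λ i (C' f)) : ℂ)).re ≤ M * M' * B * ‖f‖ ^ 2 :=
  gframe_is_CC'_controlled_gframe_general Λ C C' S hC_sa hC'_sa hS hcomm₁ hcomm₂ hcomm₃ A B m m' M
    M' hm hmM hm' hm'M' hC_lb hC_ub hC'_lb hC'_ub hlower hupper
end

section
/- A family Λ = (Λ_i)_{i∈I} of bounded linear operators Λ_i : H → H_i is a g-Bessel sequence for H with bound B if and only if for every g = (g_i)_{i∈I} in the Hilbert space (⊕_{i∈I} H_i)_{ℓ²} the family (Λ_i*(g_i))_{i∈I} is summable in H and the synthesis operator T_Λ(g) = ∑_{i∈I} Λ_i*(g_i) satisfies ‖T_Λ(g)‖ ≤ √B ‖g‖ for all g ∈ (⊕_{i∈I} H_i)_{ℓ²}. -/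
/-!
Over a finite index set `s` everything is duality between analysis `f ↦ (Λᵢ f)ᵢ` and synthesis
`c ↦ ∑ᵢ Λᵢ* cᵢ`. Expanding `‖∑ Λᵢ* cᵢ‖² = ∑ ⟪cᵢ, Λᵢ v⟫` and applying Cauchy–Schwarz bounds synthesis
by the Bessel bound; expanding `⟪∑ Λᵢ* Λᵢ f, f⟫ = ∑ ‖Λᵢ f‖²` bounds the Bessel sums by synthesis,
tested on the finitely supported `g = (Λᵢ f)_{i ∈ s}`. The finite synthesis bound then controls the
tails of `∑ Λᵢ* gᵢ` by the tails of `∑ ‖gᵢ‖²`, which gives convergence for every `g ∈ ℓ²`.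
-/

open scoped InnerProductSpace ENNReal

lemma le_of_sq_le_mul {x C : ℝ} (hC : 0 ≤ C) (h : x ^ 2 ≤ C * x) : x ≤ C := by
  nlinarith

lemma summable_and_tsum_le_iff_forall_sum_le {ι : Type*} {a : ι → ℝ} (ha : ∀ i, 0 ≤ a i)
    {c : ℝ} : (Summable a ∧ ∑' i, a i ≤ c) ↔ ∀ s : Finset ι, ∑ i ∈ s, a i ≤ c :=
  ⟨fun ⟨hs, hc⟩ s => (hs.sum_le_tsum s fun i _ => ha i).trans hc,
    fun h => have hs := summable_of_sum_le ha h; ⟨hs, hs.tsum_le_of_sum_le h⟩⟩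

namespace lp

variable {ι : Type*} {G : ι → Type*} [∀ i, NormedAddCommGroup (G i)]

lemma hasSum_norm_sq (g : lp G 2) : HasSum (fun i => ‖g i‖ ^ 2) (‖g‖ ^ 2) := by
  simpa using lp.hasSum_norm (p := 2) (by norm_num) g

lemma norm_sum_single_two [DecidableEq ι] (s : Finset ι) (c : ∀ i, G i) :
    ‖∑ i ∈ s, lp.single 2 i (c i)‖ = √(∑ i ∈ s, ‖c i‖ ^ 2) := by
  rw [← Real.sqrt_sq (norm_nonneg _)]
  simpa using congrArg Real.sqrt (lp.norm_sum_single (p := 2) (by norm_num) c s)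

lemma tsum_apply_sum_single [DecidableEq ι] {M : Type*} [AddCommMonoid M] [TopologicalSpace M]
    [T2Space M] {p : ℝ≥0∞} (φ : ∀ i, G i → M) (hφ : ∀ i, φ i 0 = 0) (s : Finset ι) (c : ∀ i, G i) :
    ∑' i, φ i ((∑ j ∈ s, lp.single p j (c j)) i) = ∑ i ∈ s, φ i (c i) := by
  have hcoord : ∀ i, (∑ j ∈ s, lp.single p j (c j)) i = if i ∈ s then c i else 0 := fun i => by
    simp only [lp.coeFn_sum, Finset.sum_apply, lp.single_apply, Finset.sum_pi_single]
  rw [tsum_eq_sum fun i hi => by rw [hcoord, if_neg hi, hφ]]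
  exact Finset.sum_congr rfl fun i hi => by rw [hcoord, if_pos hi]

end lp

section Synthesis

variable {𝕜 : Type*} [RCLike 𝕜] {H : Type*} [NormedAddCommGroup H] [InnerProductSpace 𝕜 H]
  [CompleteSpace H] {ι : Type*} {G : ι → Type*} [∀ i, NormedAddCommGroup (G i)]
  [∀ i, InnerProductSpace 𝕜 (G i)] [∀ i, CompleteSpace (G i)] (Λ : ∀ i, H →L[𝕜] G i)
  {B : ℝ}

lemma norm_sum_adjoint_le_of_sum_norm_sq_le {s : Finset ι}
    (hΛ : ∀ f, ∑ i ∈ s, ‖Λ i f‖ ^ 2 ≤ B * ‖f‖ ^ 2) (c : ∀ i, G i) :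
    ‖∑ i ∈ s, ContinuousLinearMap.adjoint (Λ i) (c i)‖ ≤ √B * √(∑ i ∈ s, ‖c i‖ ^ 2) := by
  set v := ∑ i ∈ s, ContinuousLinearMap.adjoint (Λ i) (c i)
  refine le_of_sq_le_mul (by positivity) ?_
  calc ‖v‖ ^ 2 = ∑ i ∈ s, RCLike.re ⟪c i, Λ i v⟫_𝕜 := by
        simp only [v, ← inner_self_eq_norm_sq (𝕜 := 𝕜), sum_inner, map_sum,
          ContinuousLinearMap.adjoint_inner_left]
    _ ≤ ∑ i ∈ s, ‖c i‖ * ‖Λ i v‖ := Finset.sum_le_sum fun i _ => re_inner_le_norm _ _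
    _ ≤ √(∑ i ∈ s, ‖c i‖ ^ 2) * √(∑ i ∈ s, ‖Λ i v‖ ^ 2) := Real.sum_mul_le_sqrt_mul_sqrt _ _ _
    _ ≤ √(∑ i ∈ s, ‖c i‖ ^ 2) * √(B * ‖v‖ ^ 2) := by gcongr; exact hΛ v
    _ = √B * √(∑ i ∈ s, ‖c i‖ ^ 2) * ‖v‖ := by
        rw [Real.sqrt_mul' _ (sq_nonneg _), Real.sqrt_sq (norm_nonneg _)]; ring

lemma sum_norm_sq_le_of_norm_sum_adjoint_le (hB : 0 ≤ B) {s : Finset ι} (f : H)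
    (h : ‖∑ i ∈ s, ContinuousLinearMap.adjoint (Λ i) (Λ i f)‖ ≤ √B * √(∑ i ∈ s, ‖Λ i f‖ ^ 2)) :
    ∑ i ∈ s, ‖Λ i f‖ ^ 2 ≤ B * ‖f‖ ^ 2 := by
  set S := ∑ i ∈ s, ‖Λ i f‖ ^ 2
  have hS : 0 ≤ S := Finset.sum_nonneg fun i _ => sq_nonneg _
  have hsqrt : √S ≤ √B * ‖f‖ := by
    refine le_of_sq_le_mul (by positivity) ?_
    calc √S ^ 2 = RCLike.re ⟪∑ i ∈ s, ContinuousLinearMap.adjoint (Λ i) (Λ i f), f⟫_𝕜 := by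
          simp only [Real.sq_sqrt hS, S, sum_inner, map_sum,
            ContinuousLinearMap.adjoint_inner_left, inner_self_eq_norm_sq]
      _ ≤ ‖∑ i ∈ s, ContinuousLinearMap.adjoint (Λ i) (Λ i f)‖ * ‖f‖ := re_inner_le_norm _ _
      _ ≤ √B * ‖f‖ * √S := by nlinarith [norm_nonneg f]
  calc S = √S ^ 2 := (Real.sq_sqrt hS).symm
    _ ≤ (√B * ‖f‖) ^ 2 := by gcongr
    _ = B * ‖f‖ ^ 2 := by rw [mul_pow, Real.sq_sqrt hB]

variable {Λ}

lemma summable_adjoint_apply_of_bessel (hΛ : ∀ f s, ∑ i ∈ s, ‖Λ i f‖ ^ 2 ≤ B * ‖f‖ ^ 2)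
    (g : lp G 2) : Summable fun i => ContinuousLinearMap.adjoint (Λ i) (g i) := by
  rw [summable_iff_vanishing_norm]
  intro ε hε
  set δ := ε / (√B + 1)
  have hδ : 0 < δ := by positivity
  have hBδ : √B * δ < ε := by
    rw [mul_div_assoc', div_lt_iff₀ (by positivity)]; nlinarith
  obtain ⟨s, hs⟩ := summable_iff_vanishing_norm.1 (lp.hasSum_norm_sq g).summable (δ ^ 2)
    (by positivity)
  refine ⟨s, fun t ht => ?_⟩
  have htail : √(∑ i ∈ t, ‖g i‖ ^ 2) < δ := by
    rw [Real.sqrt_lt' hδ]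
    exact (Real.le_norm_self _).trans_lt (hs t ht)
  calc ‖∑ i ∈ t, ContinuousLinearMap.adjoint (Λ i) (g i)‖ ≤ √B * √(∑ i ∈ t, ‖g i‖ ^ 2) :=
        norm_sum_adjoint_le_of_sum_norm_sq_le Λ (fun f => hΛ f t) _
    _ ≤ √B * δ := by gcongr
    _ < ε := hBδ

lemma norm_tsum_adjoint_apply_le_of_bessel (hΛ : ∀ f s, ∑ i ∈ s, ‖Λ i f‖ ^ 2 ≤ B * ‖f‖ ^ 2)
    (g : lp G 2) : ‖∑' i, ContinuousLinearMap.adjoint (Λ i) (g i)‖ ≤ √B * ‖g‖ := by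
  refine le_of_tendsto' (summable_adjoint_apply_of_bessel hΛ g).hasSum.norm fun s => ?_
  calc ‖∑ i ∈ s, ContinuousLinearMap.adjoint (Λ i) (g i)‖ ≤ √B * √(∑ i ∈ s, ‖g i‖ ^ 2) :=
        norm_sum_adjoint_le_of_sum_norm_sq_le Λ (fun f => hΛ f s) _
    _ ≤ √B * √(‖g‖ ^ 2) := by
        gcongr; exact sum_le_hasSum s (fun i _ => sq_nonneg _) (lp.hasSum_norm_sq g)
    _ = √B * ‖g‖ := by rw [Real.sqrt_sq (norm_nonneg _)]

end Synthesis

theorem gBessel_iff_synthesis_wellDefined_bounded_general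
    {H : Type*} [NormedAddCommGroup H] [InnerProductSpace ℂ H] [CompleteSpace H]
    {ι : Type*}
    {G : ι → Type*} [∀ i, NormedAddCommGroup (G i)] [∀ i, InnerProductSpace ℂ (G i)]
    [∀ i, CompleteSpace (G i)]
    (Λ : ∀ i, H →L[ℂ] G i)
    (B : ℝ) (hB : 0 ≤ B) :
    ((∀ f : H, Summable fun i => ‖Λ i f‖ ^ 2) ∧
        ∀ f : H, ∑' i, ‖Λ i f‖ ^ 2 ≤ B * ‖f‖ ^ 2) ↔
      ∀ g : lp G 2,
        Summable (fun i => (ContinuousLinearMap.adjoint (Λ i)) (g i)) ∧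
        ‖∑' i, (ContinuousLinearMap.adjoint (Λ i)) (g i)‖ ≤ Real.sqrt B * ‖g‖ := by
  classical
  have hBessel : ((∀ f : H, Summable fun i => ‖Λ i f‖ ^ 2) ∧
      ∀ f : H, ∑' i, ‖Λ i f‖ ^ 2 ≤ B * ‖f‖ ^ 2) ↔
      ∀ f s, ∑ i ∈ s, ‖Λ i f‖ ^ 2 ≤ B * ‖f‖ ^ 2 := by
    rw [← forall_and]
    exact forall_congr' fun f => summable_and_tsum_le_iff_forall_sum_le fun i => sq_nonneg _
  rw [hBessel]
  refine ⟨fun hΛ g => ⟨summable_adjoint_apply_of_bessel hΛ g,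
    norm_tsum_adjoint_apply_le_of_bessel hΛ g⟩, fun hT f s => ?_⟩
  refine sum_norm_sq_le_of_norm_sum_adjoint_le Λ hB f ?_
  have hsingle := (hT (∑ i ∈ s, lp.single 2 i (Λ i f))).2
  rwa [lp.tsum_apply_sum_single (fun i => ContinuousLinearMap.adjoint (Λ i)) (fun i => map_zero _),
    lp.norm_sum_single_two] at hsingle

/-- `Λ` is a g-Bessel sequence with bound `B` iff the synthesis operator
`T_Λ(g) = ∑ᵢ Λᵢ*(gᵢ)` is well defined on `(⊕ᵢ Hᵢ)_{ℓ²}` with `‖T_Λ g‖ ≤ √B ‖g‖`. -/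
theorem gBessel_iff_synthesis_wellDefined_bounded
    {H : Type*} [NormedAddCommGroup H] [InnerProductSpace ℂ H] [CompleteSpace H]
    {ι : Type*} [Countable ι]
    {G : ι → Type*} [∀ i, NormedAddCommGroup (G i)] [∀ i, InnerProductSpace ℂ (G i)]
    [∀ i, CompleteSpace (G i)]
    (Λ : ∀ i, H →L[ℂ] G i)
    (B : ℝ) (hB : 0 ≤ B) :
    ((∀ f : H, Summable fun i => ‖Λ i f‖ ^ 2) ∧
        ∀ f : H, ∑' i, ‖Λ i f‖ ^ 2 ≤ B * ‖f‖ ^ 2) ↔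
      ∀ g : lp G 2,
        Summable (fun i => (ContinuousLinearMap.adjoint (Λ i)) (g i)) ∧
        ‖∑' i, (ContinuousLinearMap.adjoint (Λ i)) (g i)‖ ≤ Real.sqrt B * ‖g‖ :=
  gBessel_iff_synthesis_wellDefined_bounded_general Λ B hB
end

section
/- A family Λ = (Λ_i)_{i∈I} of bounded linear operators Λ_i : H → H_i is a g-frame for H (i.e. there exist 0 < A ≤ B < ∞ with A‖f‖² ≤ ∑_{i∈I} ‖Λ_i f‖² ≤ B‖f‖² for all f ∈ H) if and only if the synthesis operator is well defined, bounded, and onto; that is: for every g = (g_i)_{i∈I} ∈ (⊕_{i∈I} H_i)_{ℓ²} the family (Λ_i*(g_i))_{i∈I} is summable in H, there is a constant K with ‖∑_{i∈I} Λ_i*(g_i)‖ ≤ K‖g‖ for all g, and for every f ∈ H there exists g ∈ (⊕_{i∈I} H_i)_{ℓ²} with ∑_{i∈I} Λ_i*(g_i) = f. -/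
/-!
The analysis operator `Θ f = (Λ i f)ᵢ` and the synthesis operator `T g = ∑ i, Λ i† (g i)` are
adjoint to each other (test both on the vectors `lp.single 2 i x`), and `∑ i, ‖Λ i f‖² = ‖Θ f‖²`.
Hence the upper frame bound says that `Θ` is bounded, and then `T = Θ†` is bounded and its series
converges, being the image of the norm-convergent expansion `g = ∑ i, lp.single 2 i (g i)`.
The lower frame bound says that `Θ` is bounded below, which is equivalent to surjectivity of
`Θ† = T`: if `Θ` is bounded below then `Θ†Θ` is coercive, hence invertible; conversely, the open
mapping theorem gives preimages under `Θ†` of controlled norm.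
-/

open Function ContinuousLinearMap
open scoped InnerProductSpace

namespace ContinuousLinearMap

variable {𝕜 E F : Type*} [RCLike 𝕜] [NormedAddCommGroup E] [InnerProductSpace 𝕜 E]
  [CompleteSpace E] [NormedAddCommGroup F] [InnerProductSpace 𝕜 F] [CompleteSpace F]

theorem surjective_adjoint_of_mul_norm_sq_le (T : E →L[𝕜] F) {c : ℝ} (hc : 0 < c)
    (h : ∀ x, c * ‖x‖ ^ 2 ≤ ‖T x‖ ^ 2) : Surjective (adjoint T) := by
  have hS : IsUnit (adjoint T ∘L T) := by
    refine isUnit_of_forall_le_norm_inner_map _ (c := c.toNNReal) (by simpa using hc) fun x => ?_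
    rw [comp_apply, adjoint_inner_left, inner_self_eq_norm_sq_to_K, norm_pow, RCLike.norm_ofReal,
      abs_norm, Real.coe_toNNReal _ hc.le, mul_comm]
    exact h x
  exact Surjective.of_comp (g := T) (isUnit_iff_bijective.mp hS).surjective

theorem exists_mul_norm_sq_le_of_surjective_adjoint (T : E →L[𝕜] F)
    (hT : Surjective (adjoint T)) : ∃ c > 0, ∀ x, c * ‖x‖ ^ 2 ≤ ‖T x‖ ^ 2 := by
  obtain ⟨C, hC, hpre⟩ := (adjoint T).exists_preimage_norm_le hT
  refine ⟨(C ^ 2)⁻¹, by positivity, fun x => ?_⟩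
  obtain ⟨y, rfl, hy⟩ := hpre x
  have hx : ‖adjoint T y‖ ^ 2 ≤ C * ‖adjoint T y‖ * ‖T (adjoint T y)‖ :=
    calc ‖adjoint T y‖ ^ 2 = RCLike.re ⟪y, T (adjoint T y)⟫_𝕜 := by
          rw [← adjoint_inner_left, inner_self_eq_norm_sq]
      _ ≤ ‖y‖ * ‖T (adjoint T y)‖ := (RCLike.re_le_norm _).trans (norm_inner_le_norm _ _)
      _ ≤ C * ‖adjoint T y‖ * ‖T (adjoint T y)‖ := by gcongr
  have hx' : ‖adjoint T y‖ ≤ C * ‖T (adjoint T y)‖ := by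
    rcases (norm_nonneg (adjoint T y)).eq_or_lt with h0 | hpos
    · rw [← h0]; positivity
    · nlinarith
  rw [inv_mul_le_iff₀ (by positivity), ← mul_pow]
  gcongr

theorem surjective_adjoint_iff_exists_mul_norm_sq_le (T : E →L[𝕜] F) :
    Surjective (adjoint T) ↔ ∃ c > 0, ∀ x, c * ‖x‖ ^ 2 ≤ ‖T x‖ ^ 2 :=
  ⟨T.exists_mul_norm_sq_le_of_surjective_adjoint, fun ⟨_, hc, h⟩ =>
    T.surjective_adjoint_of_mul_norm_sq_le hc h⟩

end ContinuousLinearMap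

theorem lp.hasSum_norm_sq_s7 {ι : Type*} {G : ι → Type*} [∀ i, NormedAddCommGroup (G i)]
    (g : lp G 2) : HasSum (fun i => ‖g i‖ ^ 2) (‖g‖ ^ 2) := by
  simpa using lp.hasSum_norm (p := 2) (by norm_num) g

section GFrame

variable {𝕜 H ι : Type*} [RCLike 𝕜] [NormedAddCommGroup H] [InnerProductSpace 𝕜 H]
  {G : ι → Type*} [∀ i, NormedAddCommGroup (G i)] [∀ i, InnerProductSpace 𝕜 (G i)]
  {Λ : ∀ i, H →L[𝕜] G i}

theorem hasSum_norm_sq_of_apply_eq {Θ : H →L[𝕜] lp G 2} (hΘ : ∀ f i, Θ f i = Λ i f) (f : H) :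
    HasSum (fun i => ‖Λ i f‖ ^ 2) (‖Θ f‖ ^ 2) := by
  simpa only [hΘ] using lp.hasSum_norm_sq_s7 (Θ f)

noncomputable def besselAnalysis {B : ℝ} (hsum : ∀ f, Summable fun i => ‖Λ i f‖ ^ 2)
    (hB : ∀ f, ∑' i, ‖Λ i f‖ ^ 2 ≤ B * ‖f‖ ^ 2) : H →L[𝕜] lp G 2 :=
  LinearMap.mkContinuous
    { toFun f := ⟨fun i => Λ i f, memℓp_gen (by simpa using hsum f)⟩
      map_add' f f' := by ext i; exact map_add (Λ i) f f'
      map_smul' c f := by ext i; exact map_smul (Λ i) c f }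
    √B fun f =>
      calc _ ≤ √(B * ‖f‖ ^ 2) := Real.le_sqrt_of_sq_le <|
              (lp.hasSum_norm_sq_s7 (G := G) ⟨_, _⟩).tsum_eq ▸ hB f
        _ = √B * ‖f‖ := by rw [Real.sqrt_mul' _ (by positivity), Real.sqrt_sq (norm_nonneg f)]

theorem besselAnalysis_apply {B : ℝ} (hsum : ∀ f, Summable fun i => ‖Λ i f‖ ^ 2)
    (hB : ∀ f, ∑' i, ‖Λ i f‖ ^ 2 ≤ B * ‖f‖ ^ 2) (f : H) (i : ι) :
    besselAnalysis hsum hB f i = Λ i f :=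
  rfl

variable [CompleteSpace H] [∀ i, CompleteSpace (G i)]

theorem hasSum_adjoint_apply_of_apply_eq {Θ : H →L[𝕜] lp G 2} (hΘ : ∀ f i, Θ f i = Λ i f)
    (g : lp G 2) : HasSum (fun i => adjoint (Λ i) (g i)) (adjoint Θ g) := by
  classical
  have hsingle : ∀ i x, adjoint Θ (lp.single 2 i x) = adjoint (Λ i) x := fun i x =>
    ext_inner_right 𝕜 fun f => by
      rw [adjoint_inner_left, adjoint_inner_left, lp.inner_single_left, hΘ]
  simpa only [hsingle] using (lp.hasSum_single ENNReal.ofNat_ne_top g).mapL (adjoint Θ)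

theorem adjoint_apply_eq_of_hasSum {T : lp G 2 →L[𝕜] H}
    (hT : ∀ g, HasSum (fun i => adjoint (Λ i) (g i)) (T g)) (f : H) (i : ι) :
    adjoint T f i = Λ i f := by
  classical
  refine ext_inner_left 𝕜 fun x => ?_
  have hsingle : T (lp.single 2 i x) = adjoint (Λ i) x := by
    refine (hT _).unique ?_
    convert hasSum_single i fun j hj => ?_ using 1
    · simp
    · simp [hj]
  rw [← lp.inner_single_left, adjoint_inner_right, hsingle, adjoint_inner_left]

noncomputable def boundedSynthesis
    (hsum : ∀ g : lp G 2, Summable fun i => adjoint (Λ i) (g i)) {K : ℝ}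
    (hK : ∀ g : lp G 2, ‖∑' i, adjoint (Λ i) (g i)‖ ≤ K * ‖g‖) : lp G 2 →L[𝕜] H :=
  LinearMap.mkContinuous
    { toFun g := ∑' i, adjoint (Λ i) (g i)
      map_add' g g' := by
        simpa only [lp.coeFn_add, Pi.add_apply, map_add] using (hsum g).tsum_add (hsum g')
      map_smul' c g := by
        simpa only [lp.coeFn_smul, Pi.smul_apply, map_smul, RingHom.id_apply] using
          (hsum g).tsum_const_smul c }
    K hK

theorem boundedSynthesis_apply (hsum : ∀ g : lp G 2, Summable fun i => adjoint (Λ i) (g i))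
    {K : ℝ} (hK : ∀ g : lp G 2, ‖∑' i, adjoint (Λ i) (g i)‖ ≤ K * ‖g‖) (g : lp G 2) :
    boundedSynthesis hsum hK g = ∑' i, adjoint (Λ i) (g i) :=
  rfl

end GFrame

theorem gframe_iff_synthesis_onto_general
    {H : Type*} [NormedAddCommGroup H] [InnerProductSpace ℂ H] [CompleteSpace H]
    {ι : Type*}
    {G : ι → Type*} [∀ i, NormedAddCommGroup (G i)] [∀ i, InnerProductSpace ℂ (G i)]
    [∀ i, CompleteSpace (G i)]
    (Λ : ∀ i, H →L[ℂ] G i) :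
    (∃ A B : ℝ, 0 < A ∧ A ≤ B ∧
        ∀ f : H, Summable (fun i => ‖Λ i f‖ ^ 2) ∧
          A * ‖f‖ ^ 2 ≤ ∑' i, ‖Λ i f‖ ^ 2 ∧ ∑' i, ‖Λ i f‖ ^ 2 ≤ B * ‖f‖ ^ 2) ↔
      ((∀ g : lp G 2, Summable fun i => (ContinuousLinearMap.adjoint (Λ i)) (g i)) ∧
        (∃ K : ℝ, ∀ g : lp G 2,
          ‖∑' i, (ContinuousLinearMap.adjoint (Λ i)) (g i)‖ ≤ K * ‖g‖) ∧
        (∀ f : H, ∃ g : lp G 2, ∑' i, (ContinuousLinearMap.adjoint (Λ i)) (g i) = f)) := by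
  constructor
  · rintro ⟨A, B, hA, -, hframe⟩
    set Θ := besselAnalysis (fun f => (hframe f).1) (fun f => (hframe f).2.2)
    have hΘ : ∀ f i, Θ f i = Λ i f := besselAnalysis_apply _ _
    have hsynth := hasSum_adjoint_apply_of_apply_eq hΘ
    have hsurj : Surjective (adjoint Θ) := (surjective_adjoint_iff_exists_mul_norm_sq_le Θ).2
      ⟨A, hA, fun f => (hasSum_norm_sq_of_apply_eq hΘ f).tsum_eq ▸ (hframe f).2.1⟩
    refine ⟨fun g => (hsynth g).summable, ⟨‖adjoint Θ‖, fun g => ?_⟩, fun f => ?_⟩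
    · exact (hsynth g).tsum_eq ▸ (adjoint Θ).le_opNorm g
    · obtain ⟨g, rfl⟩ := hsurj f
      exact ⟨g, (hsynth g).tsum_eq⟩
  · rintro ⟨hsum, ⟨K, hK⟩, honto⟩
    set T := boundedSynthesis hsum hK
    have hΘ : ∀ f i, adjoint T f i = Λ i f :=
      adjoint_apply_eq_of_hasSum fun g => boundedSynthesis_apply hsum hK g ▸ (hsum g).hasSum
    obtain ⟨A, hA, hlower⟩ := (surjective_adjoint_iff_exists_mul_norm_sq_le (adjoint T)).1 <| by
      rw [adjoint_adjoint]; exact honto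
    refine ⟨A, max A (‖adjoint T‖ ^ 2), hA, le_max_left _ _, fun f => ?_⟩
    have hnorm := hasSum_norm_sq_of_apply_eq hΘ f
    refine ⟨hnorm.summable, hnorm.tsum_eq ▸ hlower f, ?_⟩
    calc ∑' i, ‖Λ i f‖ ^ 2 = ‖adjoint T f‖ ^ 2 := hnorm.tsum_eq
      _ ≤ (‖adjoint T‖ * ‖f‖) ^ 2 := by gcongr; exact (adjoint T).le_opNorm f
      _ ≤ max A (‖adjoint T‖ ^ 2) * ‖f‖ ^ 2 := by rw [mul_pow]; gcongr; exact le_max_right _ _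

/-- `Λ` is a g-frame for `H` iff the synthesis operator
`T_Λ(g) = ∑ᵢ Λᵢ*(gᵢ)` is well defined, bounded and onto. -/
theorem gframe_iff_synthesis_onto
    {H : Type*} [NormedAddCommGroup H] [InnerProductSpace ℂ H] [CompleteSpace H]
    {ι : Type*} [Countable ι]
    {G : ι → Type*} [∀ i, NormedAddCommGroup (G i)] [∀ i, InnerProductSpace ℂ (G i)]
    [∀ i, CompleteSpace (G i)]
    (Λ : ∀ i, H →L[ℂ] G i) :
    (∃ A B : ℝ, 0 < A ∧ A ≤ B ∧
        ∀ f : H, Summable (fun i => ‖Λ i f‖ ^ 2) ∧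
          A * ‖f‖ ^ 2 ≤ ∑' i, ‖Λ i f‖ ^ 2 ∧ ∑' i, ‖Λ i f‖ ^ 2 ≤ B * ‖f‖ ^ 2) ↔
      ((∀ g : lp G 2, Summable fun i => (ContinuousLinearMap.adjoint (Λ i)) (g i)) ∧
        (∃ K : ℝ, ∀ g : lp G 2,
          ‖∑' i, (ContinuousLinearMap.adjoint (Λ i)) (g i)‖ ≤ K * ‖g‖) ∧
        (∀ f : H, ∃ g : lp G 2, ∑' i, (ContinuousLinearMap.adjoint (Λ i)) (g i) = f)) :=
  gframe_iff_synthesis_onto_general Λ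
end

section
/- A family Λ = (Λ_i)_{i∈I} of bounded linear operators Λ_i : H → H_i is a g-Bessel sequence for H (i.e. there exists B < ∞ with ∑_{i∈I} ‖Λ_i f‖² ≤ B‖f‖² for all f ∈ H) if and only if for every f ∈ H the family (Λ_i*(Λ_i f))_{i∈I} is summable in H. In this case the operator S_Λ : H → H, S_Λ f = ∑_{i∈I} Λ_i*Λ_i f, is bounded. -/
/-!
For a finite set `t`, `⟪∑_{i ∈ t} Λᵢ* Λᵢ f, g⟫ = ∑_{i ∈ t} ⟪Λᵢ f, Λᵢ g⟫`. With Cauchy–Schwarz and the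
Bessel bound this gives `‖∑_{i ∈ t} Λᵢ* Λᵢ f‖² ≤ B ∑_{i ∈ t} ‖Λᵢ f‖²`, so the Cauchy criterion for
`∑ ‖Λᵢ f‖²` transfers to `∑ Λᵢ* Λᵢ f`. Conversely, if the latter sums converge, their sum `S` is the
pointwise limit of the bounded operators `∑_{i ∈ t} Λᵢ* Λᵢ` along the countably generated filter of
finite subsets of `ι`, hence bounded by Banach–Steinhaus, and `∑ ‖Λᵢ f‖² = Re ⟪f, S f⟫ ≤ ‖S‖ ‖f‖²`.
-/

open scoped InnerProductSpace
open ContinuousLinearMap Filter Topology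

theorem summable_of_norm_sq_sum_le {ι E : Type*} [NormedAddCommGroup E] [CompleteSpace E]
    {v : ι → E} {a : ι → ℝ} (ha : Summable a) (C : ℝ)
    (h : ∀ t : Finset ι, ‖∑ i ∈ t, v i‖ ^ 2 ≤ C * ∑ i ∈ t, a i) : Summable v := by
  refine summable_iff_vanishing_norm.2 fun ε hε => ?_
  have hδ : 0 < ε ^ 2 / (|C| + 1) := by positivity
  obtain ⟨s, hs⟩ := summable_iff_vanishing_norm.1 ha _ hδ
  refine ⟨s, fun t ht => pow_lt_pow_iff_left₀ (norm_nonneg _) hε.le two_ne_zero |>.1 ?_⟩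
  have hat := hs t ht
  rw [Real.norm_eq_abs, lt_div_iff₀ (by positivity)] at hat
  calc ‖∑ i ∈ t, v i‖ ^ 2 ≤ C * ∑ i ∈ t, a i := h t
    _ ≤ |C| * |∑ i ∈ t, a i| := (le_abs_self _).trans (abs_mul _ _).le
    _ < ε ^ 2 := by nlinarith [abs_nonneg C, abs_nonneg (∑ i ∈ t, a i)]

section

universe u v w x

variable {𝕜 : Type u} {H : Type v} [RCLike 𝕜] [NormedAddCommGroup H] [InnerProductSpace 𝕜 H]
    {ι : Type w} {G : ι → Type x} [∀ i, NormedAddCommGroup (G i)] [∀ i, InnerProductSpace 𝕜 (G i)]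

def IsGBessel (Λ : ∀ i, H →L[𝕜] G i) (B : ℝ) : Prop :=
  ∀ f : H, Summable (fun i => ‖Λ i f‖ ^ 2) ∧ ∑' i, ‖Λ i f‖ ^ 2 ≤ B * ‖f‖ ^ 2

theorem IsGBessel.mono {Λ : ∀ i, H →L[𝕜] G i} {B C : ℝ} (h : IsGBessel Λ B) (hBC : B ≤ C) :
    IsGBessel Λ C := fun f =>
  ⟨(h f).1, (h f).2.trans (by gcongr)⟩

theorem IsGBessel.sum_le {Λ : ∀ i, H →L[𝕜] G i} {B : ℝ} (h : IsGBessel Λ B) (t : Finset ι)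
    (f : H) : ∑ i ∈ t, ‖Λ i f‖ ^ 2 ≤ B * ‖f‖ ^ 2 :=
  ((h f).1.sum_le_tsum t fun _ _ => sq_nonneg _).trans (h f).2

variable [CompleteSpace H] [∀ i, CompleteSpace (G i)]

theorem inner_sum_adjoint_apply (Λ : ∀ i, H →L[𝕜] G i) (t : Finset ι) (f g : H) :
    ⟪∑ i ∈ t, adjoint (Λ i) (Λ i f), g⟫_𝕜 = ∑ i ∈ t, ⟪Λ i f, Λ i g⟫_𝕜 := by
  simp only [sum_inner, adjoint_inner_left]

theorem norm_sum_adjoint_apply_le (Λ : ∀ i, H →L[𝕜] G i) {t : Finset ι} {B : ℝ} (hB : 0 ≤ B)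
    (hBt : ∀ g, ∑ i ∈ t, ‖Λ i g‖ ^ 2 ≤ B * ‖g‖ ^ 2) (f : H) :
    ‖∑ i ∈ t, adjoint (Λ i) (Λ i f)‖ ≤ √B * √(∑ i ∈ t, ‖Λ i f‖ ^ 2) := by
  rw [← innerSL_apply_norm 𝕜]
  refine opNorm_le_bound _ (by positivity) fun g => ?_
  calc ‖⟪∑ i ∈ t, adjoint (Λ i) (Λ i f), g⟫_𝕜‖ = ‖∑ i ∈ t, ⟪Λ i f, Λ i g⟫_𝕜‖ := by
        rw [inner_sum_adjoint_apply]
    _ ≤ ∑ i ∈ t, ‖Λ i f‖ * ‖Λ i g‖ := (norm_sum_le _ _).trans <|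
        Finset.sum_le_sum fun i _ => norm_inner_le_norm _ _
    _ ≤ √(∑ i ∈ t, ‖Λ i f‖ ^ 2) * √(∑ i ∈ t, ‖Λ i g‖ ^ 2) :=
        Real.sum_mul_le_sqrt_mul_sqrt _ _ _
    _ ≤ √(∑ i ∈ t, ‖Λ i f‖ ^ 2) * (√B * ‖g‖) := by
        gcongr
        rw [← Real.sqrt_sq (norm_nonneg g), ← Real.sqrt_mul hB]
        exact Real.sqrt_le_sqrt (hBt g)
    _ = √B * √(∑ i ∈ t, ‖Λ i f‖ ^ 2) * ‖g‖ := by ring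

theorem IsGBessel.summable_adjoint_apply {Λ : ∀ i, H →L[𝕜] G i} {B : ℝ} (h : IsGBessel Λ B)
    (f : H) : Summable fun i => adjoint (Λ i) (Λ i f) := by
  refine summable_of_norm_sq_sum_le (h f).1 (max B 0) fun t => ?_
  have hnorm := norm_sum_adjoint_apply_le Λ (le_max_right B 0)
    ((h.mono (le_max_left B 0)).sum_le t) f
  calc _ ≤ (√(max B 0) * √(∑ i ∈ t, ‖Λ i f‖ ^ 2)) ^ 2 := by gcongr
    _ = max B 0 * ∑ i ∈ t, ‖Λ i f‖ ^ 2 := by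
        rw [mul_pow, Real.sq_sqrt (le_max_right B 0),
          Real.sq_sqrt (Finset.sum_nonneg fun _ _ => sq_nonneg _)]

theorem hasSum_norm_sq_of_hasSum_adjoint_apply {Λ : ∀ i, H →L[𝕜] G i} {f s : H}
    (h : HasSum (fun i => adjoint (Λ i) (Λ i f)) s) :
    HasSum (fun i => ‖Λ i f‖ ^ 2) (RCLike.re ⟪f, s⟫_𝕜) := by
  have := (RCLike.hasSum_re 𝕜 ((innerSL 𝕜 f).hasSum h))
  simpa only [innerSL_apply_apply, adjoint_inner_right, inner_self_eq_norm_sq] using this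

theorem IsGBessel.of_hasSum_adjoint_apply {Λ : ∀ i, H →L[𝕜] G i} (S : H →L[𝕜] H)
    (hS : ∀ f, HasSum (fun i => adjoint (Λ i) (Λ i f)) (S f)) : IsGBessel Λ ‖S‖ := fun f =>
  have hf := hasSum_norm_sq_of_hasSum_adjoint_apply (hS f)
  ⟨hf.summable, calc
    ∑' i, ‖Λ i f‖ ^ 2 = RCLike.re ⟪f, S f⟫_𝕜 := hf.tsum_eq
    _ ≤ ‖f‖ * ‖S f‖ := (RCLike.re_le_norm _).trans (norm_inner_le_norm _ _)
    _ ≤ ‖f‖ * (‖S‖ * ‖f‖) := by gcongr; exact S.le_opNorm f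
    _ = ‖S‖ * ‖f‖ ^ 2 := by ring⟩

theorem exists_hasSum_adjoint_apply [Countable ι] {Λ : ∀ i, H →L[𝕜] G i}
    (h : ∀ f, Summable fun i => adjoint (Λ i) (Λ i f)) :
    ∃ S : H →L[𝕜] H, ∀ f, HasSum (fun i => adjoint (Λ i) (Λ i f)) (S f) := by
  have hlim : Tendsto (fun t x => (∑ i ∈ t, adjoint (Λ i) ∘L Λ i) x) atTop
      (𝓝 fun x => ∑' i, adjoint (Λ i) (Λ i x)) :=
    tendsto_pi_nhds.2 fun f => by
      simp only [sum_apply, comp_apply]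
      exact (h f).hasSum
  exact ⟨continuousLinearMapOfTendsto _ hlim, fun f => (h f).hasSum⟩

/-- `Λ` is a g-Bessel sequence for `H` iff for every `f ∈ H` the family
`(Λᵢ*(Λᵢ f))ᵢ` is summable in `H`; in this case the operator `S_Λ f = ∑ᵢ Λᵢ*Λᵢ f`
is bounded. -/
theorem gBessel_iff_frameOperator_wellDefined
    {H : Type*} [NormedAddCommGroup H] [InnerProductSpace ℂ H] [CompleteSpace H]
    {ι : Type*} [Countable ι]
    {G : ι → Type*} [∀ i, NormedAddCommGroup (G i)] [∀ i, InnerProductSpace ℂ (G i)]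
    [∀ i, CompleteSpace (G i)]
    (Λ : ∀ i, H →L[ℂ] G i) :
    ((∃ B : ℝ, ∀ f : H, Summable (fun i => ‖Λ i f‖ ^ 2) ∧
        ∑' i, ‖Λ i f‖ ^ 2 ≤ B * ‖f‖ ^ 2) ↔
      ∀ f : H, Summable fun i => (ContinuousLinearMap.adjoint (Λ i)) (Λ i f)) ∧
    ((∀ f : H, Summable fun i => (ContinuousLinearMap.adjoint (Λ i)) (Λ i f)) →
      ∃ S : H →L[ℂ] H, ∀ f : H,
        S f = ∑' i, (ContinuousLinearMap.adjoint (Λ i)) (Λ i f)) := by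
  refine ⟨⟨fun ⟨_, hB⟩ => IsGBessel.summable_adjoint_apply hB, fun h => ?_⟩, fun h => ?_⟩ <;>
    obtain ⟨S, hS⟩ := exists_hasSum_adjoint_apply h
  · exact ⟨‖S‖, IsGBessel.of_hasSum_adjoint_apply S hS⟩
  · exact ⟨S, fun f => (hS f).tsum_eq.symm⟩
end
end

section
/- Let Λ = (Λ_i)_{i∈I} and Θ = (Θ_i)_{i∈I} be g-Bessel sequences for H, suppose the family m = (m_i)_{i∈I} of complex numbers tends to 0 along the cofinite filter on I (m ∈ c₀), and suppose there is N such that each Θ_i has finite rank with rank(Θ_i) ≤ N. Then the g-multiplier M_{m,Λ,Θ} : H → H, M_{m,Λ,Θ} f = ∑_{i∈I} m_i Λ_i*(Θ_i f), is a compact operator. -/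
/-!
By Cauchy–Schwarz, the Bessel bounds give `‖∑ᵢ∈S μᵢ Λᵢ* Θᵢ‖ ≤ (supᵢ∈S |μᵢ|) √B √B'` for every
finite `S`. Since `m ∈ c₀`, the partial sums of `∑ᵢ mᵢ Λᵢ* Θᵢ` are therefore Cauchy in operator
norm. Each term has finite rank, hence is compact, and norm limits of compact operators are
compact.
-/

open Filter Topology ContinuousLinearMap

theorem isCompactOperator_of_finiteDimensional_range {𝕜 E F : Type*}
    [NontriviallyNormedField 𝕜] [ProperSpace 𝕜] [NormedAddCommGroup E] [NormedSpace 𝕜 E]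
    [NormedAddCommGroup F] [NormedSpace 𝕜 F] (T : E →L[𝕜] F)
    [FiniteDimensional 𝕜 (LinearMap.range T.toLinearMap)] : IsCompactOperator T :=
  have := FiniteDimensional.proper 𝕜 (LinearMap.range T.toLinearMap)
  (isCompactOperator_of_locallyCompactSpace_dom
    (T.codRestrict _ (LinearMap.mem_range_self T.toLinearMap))).continuous_comp
    continuous_subtype_val

theorem isCompactOperator_tsum {𝕜 ι E F : Type*} [NontriviallyNormedField 𝕜]
    [NormedAddCommGroup E] [NormedSpace 𝕜 E] [NormedAddCommGroup F] [NormedSpace 𝕜 F]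
    [CompleteSpace F] {T : ι → E →L[𝕜] F} (hT : ∀ i, IsCompactOperator (T i)) :
    IsCompactOperator ⇑(∑' i, T i) := by
  by_cases hsum : Summable T
  · exact isCompactOperator_of_tendsto hsum.hasSum <| .of_forall fun S =>
      Submodule.sum_mem (compactOperator (RingHom.id 𝕜) E F) fun i _ => hT i
  · rw [tsum_eq_zero_of_not_summable hsum]
    exact isCompactOperator_zero

section GBessel

variable {𝕜 H ι : Type*} {G : ι → Type*} [RCLike 𝕜]
  [NormedAddCommGroup H] [InnerProductSpace 𝕜 H] [CompleteSpace H]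
  [∀ i, NormedAddCommGroup (G i)] [∀ i, InnerProductSpace 𝕜 (G i)] [∀ i, CompleteSpace (G i)]
  {Λ Θ : ∀ i, H →L[𝕜] G i} {B B' : ℝ}

theorem norm_sum_adjoint_le (S : Finset ι) (hΛ : ∀ f, ∑ i ∈ S, ‖Λ i f‖ ^ 2 ≤ B * ‖f‖ ^ 2)
    (g : ∀ i, G i) :
    ‖∑ i ∈ S, adjoint (Λ i) (g i)‖ ≤ √B * √(∑ i ∈ S, ‖g i‖ ^ 2) := by
  set v := ∑ i ∈ S, adjoint (Λ i) (g i)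
  have hv : ‖v‖ * ‖v‖ ≤ √B * √(∑ i ∈ S, ‖g i‖ ^ 2) * ‖v‖ := calc
    ‖v‖ * ‖v‖ = RCLike.re (inner 𝕜 v v) := by rw [inner_self_eq_norm_mul_norm]
    _ = RCLike.re (∑ i ∈ S, inner 𝕜 (g i) (Λ i v)) := by
      simp only [v, sum_inner, adjoint_inner_left]
    _ ≤ ∑ i ∈ S, ‖g i‖ * ‖Λ i v‖ :=
      (RCLike.re_le_norm _).trans <| (norm_sum_le _ _).trans <|
        Finset.sum_le_sum fun i _ => norm_inner_le_norm _ _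
    _ ≤ √(∑ i ∈ S, ‖g i‖ ^ 2) * √(∑ i ∈ S, ‖Λ i v‖ ^ 2) := Real.sum_mul_le_sqrt_mul_sqrt _ _ _
    _ ≤ √(∑ i ∈ S, ‖g i‖ ^ 2) * √(B * ‖v‖ ^ 2) := by gcongr; exact hΛ v
    _ = √B * √(∑ i ∈ S, ‖g i‖ ^ 2) * ‖v‖ := by
      rw [Real.sqrt_mul' _ (sq_nonneg _), Real.sqrt_sq (norm_nonneg _)]; ring
  rcases (norm_nonneg v).eq_or_lt with hv0 | hv0
  · rw [← hv0]; positivity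
  · exact le_of_mul_le_mul_right hv hv0

theorem norm_sum_smul_adjoint_comp_le (S : Finset ι)
    (hΛ : ∀ f, ∑ i ∈ S, ‖Λ i f‖ ^ 2 ≤ B * ‖f‖ ^ 2) (hΘ : ∀ f, ∑ i ∈ S, ‖Θ i f‖ ^ 2 ≤ B' * ‖f‖ ^ 2)
    {μ : ι → 𝕜} {ε : ℝ} (hε : 0 ≤ ε) (hμ : ∀ i ∈ S, ‖μ i‖ ≤ ε) :
    ‖∑ i ∈ S, μ i • (adjoint (Λ i)).comp (Θ i)‖ ≤ ε * (√B * √B') := by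
  refine opNorm_le_bound _ (by positivity) fun f => ?_
  have hsq : ∑ i ∈ S, ‖μ i • Θ i f‖ ^ 2 ≤ ε ^ 2 * (B' * ‖f‖ ^ 2) := calc
    _ ≤ ∑ i ∈ S, ε ^ 2 * ‖Θ i f‖ ^ 2 := Finset.sum_le_sum fun i hi => by
      rw [norm_smul, mul_pow]; gcongr; exact hμ i hi
    _ ≤ ε ^ 2 * (B' * ‖f‖ ^ 2) := by rw [← Finset.mul_sum]; gcongr; exact hΘ f
  calc ‖(∑ i ∈ S, μ i • (adjoint (Λ i)).comp (Θ i)) f‖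
      = ‖∑ i ∈ S, adjoint (Λ i) (μ i • Θ i f)‖ := by simp [sum_apply, map_smul]
    _ ≤ √B * √(∑ i ∈ S, ‖μ i • Θ i f‖ ^ 2) := norm_sum_adjoint_le S hΛ _
    _ ≤ √B * √(ε ^ 2 * (B' * ‖f‖ ^ 2)) := by gcongr
    _ = ε * (√B * √B') * ‖f‖ := by
      rw [Real.sqrt_mul (sq_nonneg _), Real.sqrt_sq hε, Real.sqrt_mul' _ (sq_nonneg _),
        Real.sqrt_sq (norm_nonneg _)]; ring

theorem summable_smul_adjoint_comp (hΛ : ∀ S : Finset ι, ∀ f, ∑ i ∈ S, ‖Λ i f‖ ^ 2 ≤ B * ‖f‖ ^ 2)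
    (hΘ : ∀ S : Finset ι, ∀ f, ∑ i ∈ S, ‖Θ i f‖ ^ 2 ≤ B' * ‖f‖ ^ 2)
    {m : ι → 𝕜} (hm : Tendsto m cofinite (𝓝 0)) :
    Summable fun i => m i • (adjoint (Λ i)).comp (Θ i) := by
  rw [summable_iff_vanishing_norm]
  intro ε hε
  set C := √B * √B'
  have hδ : 0 < ε / (C + 1) := by positivity
  have hsmall : {i | ¬‖m i‖ < ε / (C + 1)}.Finite :=
    eventually_cofinite.mp <| (tendsto_zero_iff_norm_tendsto_zero.mp hm).eventually (gt_mem_nhds hδ)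
  refine ⟨hsmall.toFinset, fun t ht => ?_⟩
  have hμ : ∀ i ∈ t, ‖m i‖ ≤ ε / (C + 1) := fun i hi =>
    (by simpa using Finset.disjoint_left.mp ht hi : ‖m i‖ < _).le
  calc ‖∑ i ∈ t, m i • (adjoint (Λ i)).comp (Θ i)‖ ≤ ε / (C + 1) * C :=
        norm_sum_smul_adjoint_comp_le t (hΛ t) (hΘ t) hδ.le hμ
    _ < ε := by
      rw [div_mul_eq_mul_div, div_lt_iff₀ (by positivity)]
      nlinarith [show 0 ≤ C by positivity]

end GBessel

theorem gMultiplier_compact_general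
    {H : Type*} [NormedAddCommGroup H] [InnerProductSpace ℂ H] [CompleteSpace H]
    {ι : Type*}
    {G : ι → Type*} [∀ i, NormedAddCommGroup (G i)] [∀ i, InnerProductSpace ℂ (G i)]
    [∀ i, CompleteSpace (G i)]
    (Λ Θ : ∀ i, H →L[ℂ] G i)
    (B B' : ℝ)
    (hΛsum : ∀ f : H, Summable fun i => ‖Λ i f‖ ^ 2)
    (hΛ : ∀ f : H, ∑' i, ‖Λ i f‖ ^ 2 ≤ B * ‖f‖ ^ 2)
    (hΘsum : ∀ f : H, Summable fun i => ‖Θ i f‖ ^ 2)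
    (hΘ : ∀ f : H, ∑' i, ‖Θ i f‖ ^ 2 ≤ B' * ‖f‖ ^ 2)
    (m : ι → ℂ)
    (hm : Filter.Tendsto m Filter.cofinite (nhds 0))
    (hfin : ∀ i, FiniteDimensional ℂ (LinearMap.range (Θ i).toLinearMap)) :
    ∃ M : H →L[ℂ] H,
      (∀ f : H,
        HasSum (fun i => m i • (ContinuousLinearMap.adjoint (Λ i)) (Θ i f)) (M f)) ∧
      IsCompactOperator M := by
  have hΛS (S : Finset ι) (f : H) : ∑ i ∈ S, ‖Λ i f‖ ^ 2 ≤ B * ‖f‖ ^ 2 :=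
    ((hΛsum f).sum_le_tsum S fun _ _ => sq_nonneg _).trans (hΛ f)
  have hΘS (S : Finset ι) (f : H) : ∑ i ∈ S, ‖Θ i f‖ ^ 2 ≤ B' * ‖f‖ ^ 2 :=
    ((hΘsum f).sum_le_tsum S fun _ _ => sq_nonneg _).trans (hΘ f)
  have hsum := summable_smul_adjoint_comp hΛS hΘS hm
  refine ⟨∑' i, m i • (adjoint (Λ i)).comp (Θ i), fun f => ?_, ?_⟩
  · exact hsum.hasSum.mapL (apply ℂ H f)
  · refine isCompactOperator_tsum fun i => ?_
    exact ((isCompactOperator_of_finiteDimensional_range (Θ i)).clm_comp (adjoint (Λ i))).smul (m i)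

/-- For g-Bessel sequences `Λ, Θ`, a symbol `m ∈ c₀` (tending to `0` along
the cofinite filter) and uniformly bounded ranks `rank(Θᵢ) ≤ N`, the g-multiplier
`M_{m,Λ,Θ} f = ∑ᵢ mᵢ Λᵢ*(Θᵢ f)` is a compact operator on `H`. -/
theorem gMultiplier_compact
    {H : Type*} [NormedAddCommGroup H] [InnerProductSpace ℂ H] [CompleteSpace H]
    {ι : Type*} [Countable ι]
    {G : ι → Type*} [∀ i, NormedAddCommGroup (G i)] [∀ i, InnerProductSpace ℂ (G i)]
    [∀ i, CompleteSpace (G i)]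
    (Λ Θ : ∀ i, H →L[ℂ] G i)
    (B B' : ℝ)
    (hΛsum : ∀ f : H, Summable fun i => ‖Λ i f‖ ^ 2)
    (hΛ : ∀ f : H, ∑' i, ‖Λ i f‖ ^ 2 ≤ B * ‖f‖ ^ 2)
    (hΘsum : ∀ f : H, Summable fun i => ‖Θ i f‖ ^ 2)
    (hΘ : ∀ f : H, ∑' i, ‖Θ i f‖ ^ 2 ≤ B' * ‖f‖ ^ 2)
    (m : ι → ℂ)
    (hm : Filter.Tendsto m Filter.cofinite (nhds 0))
    (N : ℕ)
    (hfin : ∀ i, FiniteDimensional ℂ (LinearMap.range (Θ i).toLinearMap))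
    (hrank : ∀ i, Module.finrank ℂ (LinearMap.range (Θ i).toLinearMap) ≤ N) :
    ∃ M : H →L[ℂ] H,
      (∀ f : H,
        HasSum (fun i => m i • (ContinuousLinearMap.adjoint (Λ i)) (Θ i f)) (M f)) ∧
      IsCompactOperator M :=
  gMultiplier_compact_general Λ Θ B B' hΛsum hΛ hΘsum hΘ m hm hfin
end
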